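/- (Proposition 1(b)) Under the system assumptions, the maximum-mutual-information leakage is lower bounded by Δ_max-MI ≥ m·log|X| − H(K^n | M_A). That is, there exists a plaintext distribution (namely uniform on the decoding set D) for which I(C̄^m; X̄^n | M_A) ≥ m·log|X| − H(K^n | M_A). -/

import Mathlib

open scoped BigOperators Classical
open Real

noncomputable section

/-- A probability mass function on a finite type. -/
def IsPmf {Ω : Type*} [Fintype Ω] (μ : Ω → ℝ) : Prop :=
  (∀ ω, 0 ≤ μ ω) ∧ ∑ ω, μ ω = 1

/-- Probability of an event. -/
def pr {Ω : Type*} [Fintype Ω] (μ : Ω → ℝ) (E : Ω → Prop) : ℝ :=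
  ∑ ω, if E ω then μ ω else 0

/-- Distribution of a random variable. -/
def dist {Ω A : Type*} [Fintype Ω] (μ : Ω → ℝ) (X : Ω → A) (a : A) : ℝ :=
  pr μ (fun ω => X ω = a)

/-- Shannon entropy (natural log) of a random variable. -/
def ent {Ω A : Type*} [Fintype Ω] [Fintype A] (μ : Ω → ℝ) (X : Ω → A) : ℝ :=
  -∑ a, dist μ X a * Real.log (dist μ X a)

/-- Conditional entropy H(X|Y). -/
def condEnt {Ω A B : Type*} [Fintype Ω] [Fintype A] [Fintype B]
    (μ : Ω → ℝ) (X : Ω → A) (Y : Ω → B) : ℝ :=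
  ent μ (fun ω => (X ω, Y ω)) - ent μ Y

/-- Mutual information I(X;Y). -/
def mutInfo {Ω A B : Type*} [Fintype Ω] [Fintype A] [Fintype B]
    (μ : Ω → ℝ) (X : Ω → A) (Y : Ω → B) : ℝ :=
  ent μ X + ent μ Y - ent μ (fun ω => (X ω, Y ω))

/-- Conditional mutual information I(X;Y|Z). -/
def condMutInfo {Ω A B C : Type*} [Fintype Ω] [Fintype A] [Fintype B] [Fintype C]
    (μ : Ω → ℝ) (X : Ω → A) (Y : Ω → B) (Z : Ω → C) : ℝ :=
  ent μ (fun ω => (X ω, Z ω)) + ent μ (fun ω => (Y ω, Z ω))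
    - ent μ (fun ω => (X ω, Y ω, Z ω)) - ent μ Z

/-- Independence of two random variables. -/
def Indep {Ω A B : Type*} [Fintype Ω] (μ : Ω → ℝ) (X : Ω → A) (Y : Ω → B) : Prop :=
  ∀ a b, dist μ (fun ω => (X ω, Y ω)) (a, b) = dist μ X a * dist μ Y b

/-- Markov chain U → Z → K. -/
def Markov {Ω A B C : Type*} [Fintype Ω] (μ : Ω → ℝ)
    (U : Ω → A) (Z : Ω → B) (K : Ω → C) : Prop :=
  ∀ u z k, dist μ (fun ω => (U ω, Z ω, K ω)) (u, z, k) * dist μ Z z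
    = dist μ (fun ω => (U ω, Z ω)) (u, z) * dist μ (fun ω => (Z ω, K ω)) (z, k)


/-!
Under the product weight `ν ⊗ uniform(D)`, the plaintext `X̌` is uniform on `D` and independent
of `(K, M_A)`. So is `Č = Φ_K(X̌)`: every `Φ_k` carries the uniform law on `D` to the uniform law
on `Xᵐ`, whatever `k` is. Hence `H(Č, M_A) = H(X̌, M_A) = log |D| + H(M_A)` and
`H(X̌, K, M_A) = log |D| + H(K, M_A)`, while `H(Č, X̌, M_A) ≤ H(K, X̌, M_A)` because the former
triple is a function of the latter. Substituting into
`I(Č; X̌ | M_A) = H(Č, M_A) + H(X̌, M_A) - H(Č, X̌, M_A) - H(M_A)` and using `|D| = |X|ᵐ` gives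
the bound.
-/

open Finset

section Entropy

variable {Ω A B : Type*} [Fintype Ω]

lemma ent_eq_sum_negMulLog [Fintype A] (μ : Ω → ℝ) (Z : Ω → A) :
    ent μ Z = ∑ a, negMulLog (_root_.dist μ Z a) := by
  simp [ent, negMulLog, Finset.sum_neg_distrib]

lemma dist_nonneg_of_nonneg {μ : Ω → ℝ} (hμ : ∀ ω, 0 ≤ μ ω) (Z : Ω → A) (a : A) :
    0 ≤ _root_.dist μ Z a :=
  Finset.sum_nonneg fun ω _ => by split <;> simp [hμ ω]

lemma sum_dist [Fintype A] {μ : Ω → ℝ} (hμ : ∑ ω, μ ω = 1) (Z : Ω → A) :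
    ∑ a, _root_.dist μ Z a = 1 := by
  unfold _root_.dist pr
  rw [Finset.sum_comm]
  simp [hμ]

lemma dist_id (μ : Ω → ℝ) : _root_.dist μ id = μ := by
  ext; simp [_root_.dist, pr]

lemma dist_comp [Fintype A] (μ : Ω → ℝ) (Z : Ω → A) (f : A → B) (b : B) :
    _root_.dist μ (fun ω => f (Z ω)) b = ∑ a, if f a = b then _root_.dist μ Z a else 0 := by
  simp only [_root_.dist, pr]
  conv_lhs => rw [← Finset.sum_fiberwise _ Z]
  refine Finset.sum_congr rfl fun a _ => ?_
  rw [Finset.sum_filter]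
  split_ifs with h
  · exact Finset.sum_congr rfl fun ω _ => by split_ifs <;> simp_all
  · exact Finset.sum_eq_zero fun ω _ => by split_ifs <;> simp_all

lemma ent_comp_equiv [Fintype A] [Fintype B] (μ : Ω → ℝ) (Z : Ω → A) (e : A ≃ B) :
    ent μ (fun ω => e (Z ω)) = ent μ Z := by
  have hdist : ∀ b, _root_.dist μ (fun ω => e (Z ω)) b = _root_.dist μ Z (e.symm b) :=
    fun b => by simp only [_root_.dist, pr, ← Equiv.eq_symm_apply]
  simp only [ent_eq_sum_negMulLog, hdist]
  exact e.symm.sum_comp fun a => negMulLog (_root_.dist μ Z a)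

/-- Data processing: every atom `p a` of `Z` is at most the atom `q (f a)` of `f ∘ Z`,
so `-p a log q (f a) ≤ -p a log p a`. -/
lemma ent_comp_le [Fintype A] [Fintype B] {μ : Ω → ℝ} (hμ : ∀ ω, 0 ≤ μ ω)
    (Z : Ω → A) (f : A → B) : ent μ (fun ω => f (Z ω)) ≤ ent μ Z := by
  set p := _root_.dist μ Z
  set q := _root_.dist μ (fun ω => f (Z ω))
  have hq : ∀ b, q b = ∑ a, if f a = b then p a else 0 := dist_comp μ Z f
  have hp : ∀ a, 0 ≤ p a := dist_nonneg_of_nonneg hμ Z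
  have hp_le : ∀ a, p a ≤ q (f a) := fun a => by
    have := Finset.single_le_sum (f := fun a' => if f a' = f a then p a' else 0)
      (fun a' _ => by split <;> simp [hp a']) (Finset.mem_univ a)
    simpa [hq] using this
  have hsum : ∑ b, negMulLog (q b) = ∑ a, -(p a * log (q (f a))) := by
    calc ∑ b, negMulLog (q b)
        = ∑ b, ∑ a, if f a = b then -(p a * log (q b)) else 0 := by
          refine Finset.sum_congr rfl fun b _ => ?_
          rw [negMulLog, neg_mul]
          nth_rewrite 1 [hq b]
          rw [Finset.sum_mul, ← Finset.sum_neg_distrib]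
          refine Finset.sum_congr rfl fun a _ => ?_
          split <;> simp
      _ = ∑ a, -(p a * log (q (f a))) := by
          rw [Finset.sum_comm]
          simp
  rw [ent_eq_sum_negMulLog, ent_eq_sum_negMulLog, hsum]
  refine Finset.sum_le_sum fun a _ => ?_
  change _ ≤ negMulLog (p a)
  rcases (hp a).eq_or_lt with h | h
  · simp [← h]
  · rw [negMulLog_eq_neg, neg_le_neg_iff]
    exact mul_le_mul_of_nonneg_left (log_le_log h (hp_le a)) h.le

lemma condEnt_nonneg [Fintype A] [Fintype B] {μ : Ω → ℝ} (hμ : ∀ ω, 0 ≤ μ ω)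
    (X : Ω → A) (Y : Ω → B) : 0 ≤ condEnt μ X Y :=
  sub_nonneg.2 (ent_comp_le hμ (fun ω => (X ω, Y ω)) Prod.snd)

end Entropy

section Uniform

variable {A B : Type*} [DecidableEq A]

def uniformOn (S : Finset A) (a : A) : ℝ :=
  if a ∈ S then (#S : ℝ)⁻¹ else 0

lemma isPmf_uniformOn [Fintype A] {S : Finset A} (hS : S.Nonempty) : IsPmf (uniformOn S) := by
  refine ⟨fun a => by unfold uniformOn; split <;> positivity, ?_⟩
  simp only [uniformOn, Finset.sum_ite_mem, Finset.univ_inter, Finset.sum_const, nsmul_eq_mul]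
  exact mul_inv_cancel₀ (by exact_mod_cast hS.card_pos.ne')

lemma sum_negMulLog_uniformOn [Fintype A] (S : Finset A) :
    ∑ a, negMulLog (uniformOn S a) = log #S := by
  simp only [uniformOn, apply_ite negMulLog, negMulLog_zero]
  rw [Finset.sum_ite_mem, Finset.univ_inter, Finset.sum_const, nsmul_eq_mul, negMulLog, log_inv]
  rcases S.eq_empty_or_nonempty with rfl | hS
  · simp
  · field_simp [hS.card_pos.ne']

lemma dist_uniformOn_of_bijOn [Fintype A] [DecidableEq B] {S : Finset A} {T : Finset B} {f : A → B}
    (hf : Set.BijOn f S T) : _root_.dist (uniformOn S) f = uniformOn T := by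
  ext b
  have hsum : _root_.dist (uniformOn S) f b = ∑ x ∈ S, if f x = b then (#S : ℝ)⁻¹ else 0 := by
    simp only [_root_.dist, pr, uniformOn]
    refine (Finset.sum_subset (Finset.subset_univ S) fun x _ hx => by simp [hx]).symm.trans ?_
    exact Finset.sum_congr rfl fun x hx => by simp [hx]
  rw [hsum, uniformOn, ← hf.finsetCard_eq]
  split_ifs with hb
  · obtain ⟨x₀, hx₀, rfl⟩ := hf.surjOn hb
    rw [Finset.sum_eq_single_of_mem x₀ hx₀ fun x hx hne => if_neg fun h => hne (hf.injOn hx hx₀ h),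
      if_pos rfl]
  · exact Finset.sum_eq_zero fun x hx => if_neg fun h : f x = b => hb (h ▸ hf.mapsTo hx)

end Uniform

section Product

variable {Ω₀ Ω₁ A B : Type*}

def prodPmf (ν : Ω₀ → ℝ) (u : Ω₁ → ℝ) (w : Ω₀ × Ω₁) : ℝ :=
  ν w.1 * u w.2

lemma prodPmf_nonneg {ν : Ω₀ → ℝ} {u : Ω₁ → ℝ} (hν : ∀ ω, 0 ≤ ν ω) (hu : ∀ x, 0 ≤ u x)
    (w : Ω₀ × Ω₁) : 0 ≤ prodPmf ν u w :=
  mul_nonneg (hν w.1) (hu w.2)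

variable [Fintype Ω₀] [Fintype Ω₁]

lemma dist_prod_mk_of_forall_dist_eq (ν : Ω₀ → ℝ) (u : Ω₁ → ℝ) (F : Ω₀ → Ω₁ → A)
    (q : A → ℝ) (hF : ∀ ω, _root_.dist u (F ω) = q) (Y : Ω₀ → B) (a : A) (b : B) :
    _root_.dist (prodPmf ν u) (fun w => (F w.1 w.2, Y w.1)) (a, b)
      = q a * _root_.dist ν Y b := by
  simp only [_root_.dist, pr, prodPmf, Fintype.sum_prod_type, Prod.mk.injEq, Finset.mul_sum]
  refine Finset.sum_congr rfl fun ω _ => ?_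
  rw [← hF ω]
  by_cases hY : Y ω = b
  · simp [hY, _root_.dist, pr, Finset.mul_sum, mul_comm]
  · simp [hY]

lemma dist_prod_fst {ν : Ω₀ → ℝ} {u : Ω₁ → ℝ} (hu : ∑ x, u x = 1) (Y : Ω₀ → B) :
    _root_.dist (prodPmf ν u) (fun w => Y w.1) = _root_.dist ν Y := by
  ext b
  simp [_root_.dist, pr, prodPmf, Fintype.sum_prod_type, ← Finset.mul_sum, hu]

lemma ent_prod_fst [Fintype B] {ν : Ω₀ → ℝ} {u : Ω₁ → ℝ} (hu : ∑ x, u x = 1) (Y : Ω₀ → B) :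
    ent (prodPmf ν u) (fun w => Y w.1) = ent ν Y := by
  simp only [ent, dist_prod_fst hu]

lemma ent_prod_mk_of_forall_dist_eq [Fintype A] [Fintype B] {ν : Ω₀ → ℝ} {u : Ω₁ → ℝ}
    (hν : ∑ ω, ν ω = 1) {F : Ω₀ → Ω₁ → A} {q : A → ℝ} (hq : ∑ a, q a = 1)
    (hF : ∀ ω, _root_.dist u (F ω) = q) (Y : Ω₀ → B) :
    ent (prodPmf ν u) (fun w => (F w.1 w.2, Y w.1))
      = ∑ a, negMulLog (q a) + ent ν Y := by
  simp only [ent_eq_sum_negMulLog, Fintype.sum_prod_type,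
    dist_prod_mk_of_forall_dist_eq ν u F q hF, negMulLog_mul, Finset.sum_add_distrib,
    ← Finset.mul_sum, ← Finset.sum_mul, sum_dist hν, hq, one_mul]

end Product

/-- Proposition 1(b): With `X̌` uniform on the decoding set `D`
(`|D| = |X|^m`, each `Φ_k` a bijection from `D` onto `Xᵐ`), adjoined independently of
the key/side-information space `(Ω₀, ν)`, the plaintext distribution uniform on `D`
witnesses `Δ_max-MI ≥ m·log|X| − H(Kⁿ | M_A)`:
`I(Čᵐ; X̌ⁿ | M_A) ≥ m·log|X| − H(K | M_A)`. -/
theorem stmt11 {X 𝒦 ℳ Ω₀ : Type*} [Fintype X] [Fintype 𝒦] [Fintype ℳ] [Fintype Ω₀]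
    {n m : ℕ}
    (Φ : 𝒦 → (Fin n → X) → (Fin m → X))
    (D : Finset (Fin n → X)) (hD : D.card = Fintype.card X ^ m)
    (hbij : ∀ k, Set.BijOn (Φ k) (D : Set (Fin n → X)) Set.univ)
    (ν : Ω₀ → ℝ) (hν : IsPmf ν) (K : Ω₀ → 𝒦) (M : Ω₀ → ℳ) :
    condMutInfo
        (fun w : Ω₀ × (Fin n → X) => ν w.1 * if w.2 ∈ D then (D.card : ℝ)⁻¹ else 0)
        (fun w => Φ (K w.1) w.2) (fun w => w.2) (fun w => M w.1)
      ≥ m * Real.log (Fintype.card X) - condEnt ν K M := by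
  change condMutInfo (prodPmf ν (uniformOn D)) _ _ _ ≥ _
  rw [← log_pow, ← Nat.cast_pow, ← hD]
  rcases D.eq_empty_or_nonempty with rfl | hDne
  -- `D = ∅`: the weight `prodPmf ν (uniformOn ∅)` vanishes, and so does every entropy under it.
  · simpa [condMutInfo, ent, _root_.dist, pr, prodPmf, uniformOn] using condEnt_nonneg hν.1 K M
  have hu := isPmf_uniformOn hDne
  have hcard : #(univ : Finset (Fin m → X)) = #D := by simp [hD]
  have hC : ∀ ω, _root_.dist (uniformOn D) (Φ (K ω)) = uniformOn univ := fun ω =>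
    dist_uniformOn_of_bijOn (by simpa using hbij (K ω))
  have hX : ∀ _ : Ω₀, _root_.dist (uniformOn D) (fun x => x) = uniformOn D := fun _ => dist_id _
  have hM := ent_prod_fst (ν := ν) hu.2 M
  have hCM := ent_prod_mk_of_forall_dist_eq hν.2
    (isPmf_uniformOn (card_pos.1 (hcard ▸ hDne.card_pos))).2 hC M
  have hXM := ent_prod_mk_of_forall_dist_eq hν.2 hu.2 hX M
  have hXKM := ent_prod_mk_of_forall_dist_eq hν.2 hu.2 hX fun ω => (K ω, M ω)
  have hKXM : ent (prodPmf ν (uniformOn D)) (fun w => (K w.1, w.2, M w.1))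
      = ent (prodPmf ν (uniformOn D)) (fun w => (w.2, K w.1, M w.1)) :=
    ent_comp_equiv (prodPmf ν (uniformOn D)) (fun w => (w.2, K w.1, M w.1))
      ⟨fun t => (t.2.1, t.1, t.2.2), fun t => (t.2.1, t.1, t.2.2), fun _ => rfl, fun _ => rfl⟩
  have hdp := ent_comp_le (prodPmf_nonneg hν.1 hu.1)
    (fun w : Ω₀ × (Fin n → X) => (K w.1, w.2, M w.1)) fun t => (Φ t.1 t.2.1, t.2.1, t.2.2)
  simp only [condMutInfo, condEnt, sum_negMulLog_uniformOn, hcard] at *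
  linarith
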